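/- arXiv:2602.15008 — 3 statements merged into one kernel-verified Lean document; each statement's English description precedes it below -/
import Mathlib

section
/- For any real B > 0 and any real z with log z ≥ -B, one has z - 1 - log z ≥ (log z)^2 / (2(1 + B)) (more generally, z - 1 - log z ≳ (log z)^2 / B up to a universal constant when B ≥ 1). -/
/-! With `t = log z` the claim reads `t ^ 2 ≤ 2 (1 + B) (exp t - 1 - t)` for `t ≥ -B`. For `t ≥ 0`
this is the Taylor bound `exp t ≥ 1 + t + t ^ 2 / 2`. For `t ≤ 0` the sharper bound
`t ^ 2 ≤ 2 (1 - t) (exp t - 1 - t)` holds: the difference vanishes at `0` and has derivative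
`2 t (1 - exp t) ≤ 0`; then `1 - t ≤ 1 + B`. -/

open Real Set

lemma hasDerivAt_two_mul_one_sub_mul_exp_sub_one_sub_sub_sq (t : ℝ) :
    HasDerivAt (fun x : ℝ ↦ 2 * (1 - x) * (exp x - 1 - x) - x ^ 2) (2 * t * (1 - exp t)) t := by
  have hφ : HasDerivAt (fun x : ℝ ↦ exp x - 1 - x) (exp t - 1) t :=
    ((hasDerivAt_exp t).sub_const 1).sub (hasDerivAt_id t)
  have hlin : HasDerivAt (fun x : ℝ ↦ 2 * (1 - x)) (-2) t := by
    simpa using ((hasDerivAt_id t).const_sub 1).const_mul 2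
  refine ((hlin.mul hφ).sub (hasDerivAt_pow 2 t)).congr_deriv ?_
  norm_num
  ring

lemma sq_le_two_mul_one_sub_mul_exp_sub_one_sub {t : ℝ} (ht : t ≤ 0) :
    t ^ 2 ≤ 2 * (1 - t) * (exp t - 1 - t) := by
  set F : ℝ → ℝ := fun x ↦ 2 * (1 - x) * (exp x - 1 - x) - x ^ 2
  have hF := hasDerivAt_two_mul_one_sub_mul_exp_sub_one_sub_sub_sq
  have hanti : AntitoneOn F (Iic 0) := by
    refine antitoneOn_of_deriv_nonpos (convex_Iic 0)
      (fun x _ ↦ (hF x).continuousAt.continuousWithinAt)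
      (fun x _ ↦ (hF x).differentiableAt.differentiableWithinAt) fun x hx ↦ ?_
    rw [interior_Iic, mem_Iio] at hx
    rw [(hF x).deriv]
    nlinarith [exp_le_one_iff.2 hx.le]
  simpa [F] using hanti ht self_mem_Iic ht

lemma sq_le_two_mul_one_add_mul_exp_sub_one_sub {B t : ℝ} (hB : 0 ≤ B) (ht : -B ≤ t) :
    t ^ 2 ≤ 2 * (1 + B) * (exp t - 1 - t) := by
  have hφ : 0 ≤ exp t - 1 - t := by linarith [add_one_le_exp t]
  rcases le_total 0 t with ht₀ | ht₀
  · nlinarith [quadratic_le_exp_of_nonneg ht₀]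
  · nlinarith [sq_le_two_mul_one_sub_mul_exp_sub_one_sub ht₀]

/-- For any real `B > 0` and any real `z > 0` with `log z ≥ -B`, one has
`z - 1 - log z ≥ (log z)^2 / (2(1 + B))`. -/
theorem sub_one_sub_log_ge_sq_log_div (B z : ℝ) (hB : 0 < B) (hz : 0 < z)
    (h : -B ≤ Real.log z) :
    (Real.log z) ^ 2 / (2 * (1 + B)) ≤ z - 1 - Real.log z := by
  obtain ⟨t, rfl⟩ : ∃ t, z = exp t := ⟨log z, (exp_log hz).symm⟩
  rw [log_exp] at h ⊢
  rw [div_le_iff₀ (by linarith), mul_comm]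
  exact sq_le_two_mul_one_add_mul_exp_sub_one_sub hB.le h
end

section
/- Let q be a probability distribution on a finite product space V^d, and let W be a random variable such that conditionally on W the coordinates X^1,...,X^d of X ~ q satisfy X^i independent of X^{-i} given W for every i. Then the dual total correlation B(q) := H(X) - Σ_i H(X^i | X^{-i}) satisfies B(q) ≤ I(X; W). If moreover W is discrete, then B(q) ≤ H(W). -/
open Finset

/-- Shannon entropy of a probability mass function on a finite type,
`H(p) = -∑ x p(x) log p(x)`. -/
noncomputable def ent {α : Type*} [Fintype α] (p : α → ℝ) : ℝ :=
  ∑ x, Real.negMulLog (p x)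

/-- Marginal distribution of the `i`-th coordinate of a distribution on `ι → V`. -/
noncomputable def margAt {ι V : Type*} [Fintype ι] [Fintype V] [DecidableEq ι]
    (q : (ι → V) → ℝ) (i : ι) : V → ℝ :=
  fun v => ∑ y : {j : ι // j ≠ i} → V, q (fun j => if h : j = i then v else y ⟨j, h⟩)

/-- Marginal distribution of all coordinates except the `i`-th of a distribution on `ι → V`. -/
noncomputable def margAway {ι V : Type*} [Fintype ι] [Fintype V] [DecidableEq ι]
    (q : (ι → V) → ℝ) (i : ι) : ({j : ι // j ≠ i} → V) → ℝ :=
  fun y => ∑ v : V, q (fun j => if h : j = i then v else y ⟨j, h⟩)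

/-- The conditional entropy `H(X^i | X^{-i}) = H(X) - H(X^{-i})`. -/
noncomputable def condEntAt {ι V : Type*} [Fintype ι] [Fintype V] [DecidableEq ι]
    (q : (ι → V) → ℝ) (i : ι) : ℝ :=
  ent q - ent (margAway q i)

/-- The dual total correlation `B(q) = H(X) - ∑ i H(X^i | X^{-i})`. -/
noncomputable def dualTC {ι V : Type*} [Fintype ι] [Fintype V] [DecidableEq ι]
    (q : (ι → V) → ℝ) : ℝ :=
  ent q - ∑ i : ι, condEntAt q i

/-- The total correlation `C(q) = ∑ i H(X^i) - H(X)`. -/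
noncomputable def totalCorr {ι V : Type*} [Fintype ι] [Fintype V] [DecidableEq ι]
    (q : (ι → V) → ℝ) : ℝ :=
  (∑ i : ι, ent (margAt q i)) - ent q

/-!
Conditioning reduces entropy, so `H(X^i | X^{-i}) ≥ H(X^i | X^{-i}, W)`, and the conditional
independence turns the right-hand side into `H(X^i | W)`. By subadditivity of conditional entropy
`∑ i, H(X^i | W) ≥ H(X | W)`, hence `B(q) ≤ H(X) - H(X | W) = I(X; W)`, and `I(X; W) ≤ H(W)`
since `H(X) ≤ H(X, W)`.

Both entropy inequalities are Gibbs' inequality `H(p) ≤ -∑ p log b`, applied with weights `b` of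
total mass at most that of `p` under which the corresponding conditional independence holds.
-/

open Real

section Gibbs

variable {α : Type*} [Fintype α]

theorem sum_mul_log_self (p : α → ℝ) : ∑ z, p z * log (p z) = -ent p := by
  simp [ent, negMulLog]

theorem sum_mul_congr_of_pos {p u v : α → ℝ} (hp : 0 ≤ p) (h : ∀ z, 0 < p z → u z = v z) :
    ∑ z, p z * u z = ∑ z, p z * v z :=
  sum_congr rfl fun z _ => by
    rcases (hp z).eq_or_lt with h0 | h0
    · simp [← h0]
    · rw [h z h0]

theorem ent_le_neg_sum_mul_log {a b : α → ℝ} (ha : 0 ≤ a) (hb : 0 ≤ b)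
    (hab : ∀ z, 0 < a z → 0 < b z) (hsum : ∑ z, b z ≤ ∑ z, a z) :
    ent a ≤ -∑ z, a z * log (b z) := by
  have key : ∀ z, negMulLog (a z) + a z * log (b z) ≤ b z - a z := by
    intro z
    rcases (ha z).eq_or_lt with h0 | h0
    · simpa [← h0] using hb z
    have hlog := log_le_sub_one_of_pos (div_pos (hab z h0) h0)
    rw [log_div (hab z h0).ne' h0.ne'] at hlog
    have := mul_le_mul_of_nonneg_left hlog h0.le
    rw [mul_sub_one, mul_div_cancel₀ _ h0.ne'] at this
    rw [negMulLog]
    linarith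
  have := sum_le_sum fun z (_ : z ∈ univ) => key z
  rw [sum_add_distrib, sum_sub_distrib] at this
  rw [ent]
  linarith

end Gibbs

section Pushforward

variable {α β γ : Type*} [Fintype α] [DecidableEq β]

noncomputable def pushforward (p : α → ℝ) (f : α → β) : β → ℝ :=
  fun b => ∑ a with f a = b, p a

theorem pushforward_nonneg {p : α → ℝ} (hp : 0 ≤ p) (f : α → β) : 0 ≤ pushforward p f :=
  fun _ => sum_nonneg fun a _ => hp a

theorem le_pushforward_apply {p : α → ℝ} (hp : 0 ≤ p) (f : α → β) (a : α) :
    p a ≤ pushforward p f (f a) :=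
  single_le_sum (fun a _ => hp a) (by simp)

theorem pushforward_pos {p : α → ℝ} (hp : 0 ≤ p) (f : α → β) {a : α} (ha : 0 < p a) :
    0 < pushforward p f (f a) :=
  ha.trans_le (le_pushforward_apply hp f a)

theorem pushforward_map_fst_apply [Fintype γ] [DecidableEq γ] (p : α × γ → ℝ) (f : α → β)
    (b : β) (c : γ) :
    pushforward p (fun z => (f z.1, z.2)) (b, c) = pushforward (fun a => p (a, c)) f b := by
  simp [pushforward, sum_filter, Fintype.sum_prod_type, ite_and]

variable [Fintype β]

theorem sum_pushforward (p : α → ℝ) (f : α → β) : ∑ b, pushforward p f b = ∑ a, p a :=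
  sum_fiberwise univ f p

theorem sum_mul_comp_eq_sum_pushforward_mul (p : α → ℝ) (f : α → β) (g : β → ℝ) :
    ∑ a, p a * g (f a) = ∑ b, pushforward p f b * g b := by
  simp only [pushforward, sum_mul]
  rw [← sum_fiberwise univ f fun a => p a * g (f a)]
  refine sum_congr rfl fun b _ => sum_congr rfl fun a ha => ?_
  rw [(mem_filter.1 ha).2]

theorem sum_mul_log_pushforward (p : α → ℝ) (f : α → β) :
    ∑ a, p a * log (pushforward p f (f a)) = -ent (pushforward p f) := by
  rw [sum_mul_comp_eq_sum_pushforward_mul p f fun b => log (pushforward p f b),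
    ← sum_mul_log_self]

theorem pushforward_pushforward [Fintype γ] [DecidableEq γ] (p : α → ℝ) (f : α → β)
    (g : β → γ) : pushforward (pushforward p f) g = pushforward p (g ∘ f) := by
  funext c
  have h := sum_mul_comp_eq_sum_pushforward_mul p f fun b => if g b = c then (1 : ℝ) else 0
  simpa only [pushforward, sum_filter, mul_boole, Function.comp_apply] using h.symm

theorem pushforward_fst [Fintype γ] (p : β × γ → ℝ) :
    pushforward p Prod.fst = fun b => ∑ c, p (b, c) := by
  funext b
  simp only [pushforward, sum_filter, Fintype.sum_prod_type]
  rw [sum_comm]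
  simp

theorem pushforward_snd [Fintype γ] (p : γ × β → ℝ) :
    pushforward p Prod.snd = fun b => ∑ c, p (c, b) := by
  funext b
  simp only [pushforward, sum_filter, Fintype.sum_prod_type_right]
  rw [sum_comm]
  simp

end Pushforward

section EntropyOfPushforward

variable {Ω β γ δ : Type*} [Fintype Ω] [Fintype β] [DecidableEq β] [Fintype γ] [DecidableEq γ]
  [Fintype δ] [DecidableEq δ] {p : Ω → ℝ}

theorem ent_pushforward_le (hp : 0 ≤ p) (f : Ω → β) : ent (pushforward p f) ≤ ent p := by
  have hlog : ∀ z, p z * log (p z) ≤ p z * log (pushforward p f (f z)) := fun z => by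
    rcases (hp z).eq_or_lt with h0 | h0
    · simp [← h0]
    · exact mul_le_mul_of_nonneg_left (log_le_log h0 (le_pushforward_apply hp f z)) h0.le
  have := sum_le_sum fun z (_ : z ∈ univ) => hlog z
  rw [sum_mul_log_self, sum_mul_log_pushforward] at this
  linarith

theorem sum_mul_log_pushforward_mul_div (hp : 0 ≤ p) (f : Ω → β) (g : Ω → γ) (h : Ω → δ) :
    ∑ z, p z * log (pushforward p f (f z) * pushforward p g (g z) / pushforward p h (h z))
      = ent (pushforward p h) - ent (pushforward p f) - ent (pushforward p g) := by
  rw [sum_mul_congr_of_pos hp (v := fun z => log (pushforward p f (f z))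
      + log (pushforward p g (g z)) - log (pushforward p h (h z))) fun z hz => by
    rw [log_div (mul_pos (pushforward_pos hp f hz) (pushforward_pos hp g hz)).ne'
      (pushforward_pos hp h hz).ne', log_mul (pushforward_pos hp f hz).ne'
      (pushforward_pos hp g hz).ne']]
  simp only [mul_sub, mul_add, sum_sub_distrib, sum_add_distrib, sum_mul_log_pushforward]
  ring

theorem ent_add_ent_pushforward_eq_of_mul_eq (hp : 0 ≤ p) (f : Ω → β) (g : Ω → γ) (h : Ω → δ)
    (hfac : ∀ z, p z * pushforward p h (h z) = pushforward p f (f z) * pushforward p g (g z)) :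
    ent p + ent (pushforward p h) = ent (pushforward p f) + ent (pushforward p g) := by
  have := sum_mul_congr_of_pos hp (u := fun z => log (p z))
    (v := fun z => log (pushforward p f (f z) * pushforward p g (g z) / pushforward p h (h z)))
    fun z hz => by rw [← hfac, mul_div_cancel_right₀ _ (pushforward_pos hp h hz).ne']
  rw [sum_mul_log_self, sum_mul_log_pushforward_mul_div hp] at this
  linarith

end EntropyOfPushforward

theorem ent_add_ent_pushforward_comp_fst_le {α W κ : Type*} [Fintype α] [DecidableEq α]
    [Fintype W] [DecidableEq W] [Fintype κ] [DecidableEq κ]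
    {P : α × W → ℝ} (hP : 0 ≤ P) (k : α → κ) :
    ent P + ent (pushforward P (k ∘ Prod.fst))
      ≤ ent (pushforward P Prod.fst) + ent (pushforward P fun z => (k z.1, z.2)) := by
  set Pf := pushforward P Prod.fst
  set Pg := pushforward P fun z => (k z.1, z.2)
  set Ph := pushforward P (k ∘ Prod.fst)
  have hmarg : ∀ c, ∑ w, Pg (c, w) = Ph c := fun c => by
    rw [← congrFun (pushforward_fst Pg) c, pushforward_pushforward]
    rfl
  -- the comparison weights make `X` and `W` conditionally independent given `k X`
  have hsum : ∑ z : α × W, Pf z.1 * Pg (k z.1, z.2) / Ph (k z.1) ≤ ∑ z, P z := calc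
    _ = ∑ a, Pf a * ((∑ w, Pg (k a, w)) / Ph (k a)) := by
      rw [Fintype.sum_prod_type]
      simp only [sum_div, mul_sum, mul_div_assoc]
    _ ≤ ∑ a, Pf a := sum_le_sum fun a _ =>
      mul_le_of_le_one_right (pushforward_nonneg hP _ a) (by rw [hmarg]; exact div_self_le_one _)
    _ = ∑ z, P z := sum_pushforward P Prod.fst
  have hGibbs := ent_le_neg_sum_mul_log hP
    (fun z => div_nonneg (mul_nonneg (pushforward_nonneg hP _ _) (pushforward_nonneg hP _ _))
      (pushforward_nonneg hP _ _))
    (fun z hz => div_pos (mul_pos (pushforward_pos hP _ hz) (pushforward_pos hP _ hz))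
      (pushforward_pos hP _ hz)) hsum
  rw [sum_mul_log_pushforward_mul_div hP Prod.fst (fun z => (k z.1, z.2)) (k ∘ Prod.fst)]
    at hGibbs
  linarith

theorem ent_sub_ent_pushforward_snd_le_sum {ι W : Type*} {V : ι → Type*} [Fintype ι]
    [DecidableEq ι] [∀ i, Fintype (V i)] [∀ i, DecidableEq (V i)] [Fintype W] [DecidableEq W]
    {p : ((i : ι) → V i) × W → ℝ} (hp : 0 ≤ p) :
    ent p - ent (pushforward p Prod.snd)
      ≤ ∑ i, (ent (pushforward p fun z => (z.1 i, z.2)) - ent (pushforward p Prod.snd)) := by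
  set r := pushforward p Prod.snd
  set A := fun i => pushforward p fun z => (z.1 i, z.2)
  have hmarg : ∀ i w, ∑ v, A i (v, w) = r w := fun i w => by
    rw [← congrFun (pushforward_snd (A i)) w, pushforward_pushforward]
    rfl
  -- the comparison weights make the coordinates of `X` conditionally independent given `W`
  set b := fun z : ((i : ι) → V i) × W => r z.2 * ∏ i, (A i (z.1 i, z.2) / r z.2)
  have hsum : ∑ z, b z ≤ ∑ z, p z := calc
    _ = ∑ w, r w * ∏ i, ((∑ v, A i (v, w)) / r w) := by
      rw [Fintype.sum_prod_type_right]
      refine sum_congr rfl fun w _ => ?_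
      simp only [b, ← mul_sum, sum_div, Fintype.prod_sum]
    _ ≤ ∑ w, r w := sum_le_sum fun w _ =>
      mul_le_of_le_one_right (pushforward_nonneg hp _ w) (prod_le_one
        (fun i _ => div_nonneg (sum_nonneg fun v _ => pushforward_nonneg hp _ _)
          (pushforward_nonneg hp _ w))
        fun i _ => by rw [hmarg]; exact div_self_le_one _)
    _ = ∑ z, p z := sum_pushforward p Prod.snd
  have hGibbs := ent_le_neg_sum_mul_log hp
    (fun z => mul_nonneg (pushforward_nonneg hp _ _) (prod_nonneg fun i _ =>
      div_nonneg (pushforward_nonneg hp _ _) (pushforward_nonneg hp _ _)))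
    (fun z hz => mul_pos (pushforward_pos hp _ hz) (prod_pos fun i _ =>
      div_pos (pushforward_pos hp _ hz) (pushforward_pos hp _ hz))) hsum
  have hlog : ∑ z, p z * log (b z)
      = ∑ z, p z * (log (r z.2) + ∑ i, (log (A i (z.1 i, z.2)) - log (r z.2))) :=
    sum_mul_congr_of_pos hp fun z hz => by
      have hr := pushforward_pos hp Prod.snd hz
      have hA := fun i => pushforward_pos hp (fun z => (z.1 i, z.2)) hz
      rw [log_mul hr.ne' (prod_pos fun i _ => div_pos (hA i) hr).ne',
        log_prod fun i _ => (div_pos (hA i) hr).ne']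
      simp only [log_div (hA _).ne' hr.ne']
      rfl
  have hr : ∑ z, p z * log (r z.2) = -ent r := sum_mul_log_pushforward p Prod.snd
  have hA : ∀ i, ∑ z, p z * log (A i (z.1 i, z.2)) = -ent (A i) :=
    fun i => sum_mul_log_pushforward p _
  rw [hlog] at hGibbs
  simp only [mul_add, mul_sum, mul_sub, sum_add_distrib] at hGibbs
  rw [sum_comm] at hGibbs
  simp only [sum_sub_distrib, hr, hA, sum_neg_distrib] at hGibbs
  show ent p - ent r ≤ ∑ i, (ent (A i) - ent r)
  rw [sum_sub_distrib]
  linarith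

section Coordinates

variable {ι V : Type*} [Fintype ι] [DecidableEq ι] [Fintype V]

theorem margAway_apply_restrict (q : (ι → V) → ℝ) (i : ι) (x : ι → V) :
    margAway q i (fun j => x j) = ∑ v, q (Function.update x i v) := by
  refine sum_congr rfl fun v _ => congrArg q (funext fun j => ?_)
  by_cases h : j = i
  · subst h; simp
  · simp [h]

theorem margAway_eq_pushforward [DecidableEq V] (q : (ι → V) → ℝ) (i : ι) :
    margAway q i = pushforward q fun x (j : {j // j ≠ i}) => x j := by
  funext y
  have restrict_split : ∀ v y',
      (fun j : {j // j ≠ i} => (Equiv.funSplitAt i V).symm (v, y') j) = y' :=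
    fun v y' => congrArg Prod.snd ((Equiv.funSplitAt i V).apply_symm_apply (v, y'))
  rw [pushforward, sum_filter, ← Equiv.sum_comp (Equiv.funSplitAt i V).symm,
    Fintype.sum_prod_type]
  simp only [restrict_split, sum_ite_eq', mem_univ, if_true]
  refine sum_congr rfl fun v _ => congrArg q (funext fun j => ?_)
  rw [Equiv.funSplitAt_symm_apply]

end Coordinates

theorem dualTC_le_mutualInfo_of_condIndep_general
    (ι V W : Type*) [Fintype ι] [DecidableEq ι] [Fintype V] [DecidableEq V] [Fintype W]
    (p : ((ι → V) × W) → ℝ)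
    (hp : ∀ z, 0 ≤ p z)
    (hCI : ∀ (i : ι) (x : ι → V) (w : W),
      p (x, w) * (∑ x', p (x', w))
        = (∑ x', if x' i = x i then p (x', w) else 0)
            * (∑ v, p (Function.update x i v, w))) :
    dualTC (fun x => ∑ w, p (x, w))
      ≤ ent (fun x => ∑ w, p (x, w)) + ent (fun w => ∑ x, p (x, w)) - ent p ∧
    dualTC (fun x => ∑ w, p (x, w)) ≤ ent (fun w => ∑ x, p (x, w)) := by
  classical
  replace hp : 0 ≤ p := hp
  have hfactor : ∀ i z, p z * pushforward p Prod.snd z.2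
      = pushforward p (fun z => (z.1 i, z.2)) (z.1 i, z.2)
        * pushforward p (fun z => (fun j : {j // j ≠ i} => z.1 j, z.2)) (fun j => z.1 j, z.2) := by
    rintro i ⟨x, w⟩
    dsimp only
    rw [pushforward_snd, pushforward_map_fst_apply p (fun x => x i),
      pushforward_map_fst_apply p (fun x (j : {j // j ≠ i}) => x j), ← margAway_eq_pushforward,
      margAway_apply_restrict, pushforward, sum_filter]
    exact hCI i x w
  have hstep : ∀ i, ent (pushforward p fun z => (z.1 i, z.2)) - ent (pushforward p Prod.snd)
      ≤ ent (pushforward p Prod.fst) - ent (margAway (pushforward p Prod.fst) i) := by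
    intro i
    have hsplit := ent_add_ent_pushforward_eq_of_mul_eq hp _ _ _ (hfactor i)
    have hcond := ent_add_ent_pushforward_comp_fst_le hp fun x (j : {j // j ≠ i}) => x j
    rw [margAway_eq_pushforward, pushforward_pushforward]
    linarith
  have hsub := ent_sub_ent_pushforward_snd_le_sum hp
  have hmarg := ent_pushforward_le hp Prod.fst
  have hsum := sum_le_sum fun i (_ : i ∈ univ) => hstep i
  rw [← pushforward_fst p, ← pushforward_snd p]
  simp only [dualTC, condEntAt]
  constructor <;> linarith

/-- Dual total correlation is bounded by mutual information with a conditionally separating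
variable: if `X^i ⊥ X^{-i} | W` for every `i`, then `B(law of X) ≤ I(X;W)`, and (since `W` is
discrete here) also `B(law of X) ≤ H(W)`.  Mutual information is written as
`I(X;W) = H(X) + H(W) - H(X,W)`. -/
theorem dualTC_le_mutualInfo_of_condIndep
    (ι V W : Type*) [Fintype ι] [DecidableEq ι] [Fintype V] [DecidableEq V] [Fintype W]
    (p : ((ι → V) × W) → ℝ)
    (hp : ∀ z, 0 ≤ p z) (hps : ∑ z, p z = 1)
    (hCI : ∀ (i : ι) (x : ι → V) (w : W),
      p (x, w) * (∑ x', p (x', w))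
        = (∑ x', if x' i = x i then p (x', w) else 0)
            * (∑ v, p (Function.update x i v, w))) :
    dualTC (fun x => ∑ w, p (x, w))
      ≤ ent (fun x => ∑ w, p (x, w)) + ent (fun w => ∑ x, p (x, w)) - ent p ∧
    dualTC (fun x => ∑ w, p (x, w)) ≤ ent (fun w => ∑ x, p (x, w)) :=
  dualTC_le_mutualInfo_of_condIndep_general ι V W p hp hCI
end

section
/- For the uniform noising process on [S]^d with rate Q^tok(a,b) = 1/S for a ≠ b, the score function satisfies s_t(y,x) = E_{x_0~q_0}[α_t^{ham(y,x_0)}] / E_{x_0~q_0}[α_t^{ham(x,x_0)}], where α_t = (1 - e^{-t})/(1 + (S-1)e^{-t}), and consequently for any x, y at Hamming distance 1, |log s_t(y,x)| ≤ -log α_t ≲ log S + max(log(1/t), 0). -/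
open Finset

/-- Hamming distance on `[S]^d`. -/
def hamm {S d : ℕ} (x y : Fin d → Fin S) : ℕ :=
  (Finset.univ.filter fun i => x i ≠ y i).card

/-- `α_t = (1 - e^{-t})/(1 + (S-1)e^{-t})`. -/
noncomputable def alphaUnif (S : ℕ) (t : ℝ) : ℝ :=
  (1 - Real.exp (-t)) / (1 + ((S : ℝ) - 1) * Real.exp (-t))

/-- The marginal at time `t` of the uniform noising process on `[S]^d` started at `q0`,
obtained from the product transition kernel
`q_{t|0}(y|x0) = ((1-e^{-t})/S)^{ham(y,x0)} ((1+(S-1)e^{-t})/S)^{d-ham(y,x0)}`. -/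
noncomputable def qtUnif {S d : ℕ} (q0 : (Fin d → Fin S) → ℝ) (t : ℝ)
    (y : Fin d → Fin S) : ℝ :=
  ∑ x0, q0 x0 * ((1 + ((S : ℝ) - 1) * Real.exp (-t)) / S) ^ d * alphaUnif S t ^ hamm y x0

/-!
Factoring the constant `((1 + (S-1)e^{-t})/S)^d` out of the kernel gives the formula for the
score. If `x` and `y` differ in one coordinate, `ham(x, x₀)` and `ham(y, x₀)` differ by at most
one for every `x₀`, so `α_t ∑ q₀ α_t^{ham(y,·)} ≤ ∑ q₀ α_t^{ham(x,·)}` and symmetrically; hence the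
score lies in `[α_t, α_t⁻¹]`. Finally `e^t ≥ 1 + t` gives `α_t⁻¹ ≤ S (1 + 1/t)`.
-/

open Real

lemma hamm_le_hamm_add_one {S d : ℕ} {x y : Fin d → Fin S} (hxy : hamm x y = 1)
    (z : Fin d → Fin S) : hamm x z ≤ hamm y z + 1 := by
  have := hammingDist_triangle x y z
  change hammingDist x y = 1 at hxy
  change hammingDist x z ≤ hammingDist y z + 1
  omega

lemma hamm_comm {S d : ℕ} (x y : Fin d → Fin S) : hamm x y = hamm y x :=
  hammingDist_comm x y

lemma sum_mul_pos_of_sum_pos {ι : Type*} {s : Finset ι} {w f : ι → ℝ}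
    (hw : ∀ i ∈ s, 0 ≤ w i) (hsum : 0 < ∑ i ∈ s, w i) (hf : ∀ i ∈ s, 0 < f i) :
    0 < ∑ i ∈ s, w i * f i := by
  obtain ⟨j, hjs, hj⟩ := exists_lt_of_sum_lt (s := s) (f := 0) (g := w) (by simpa using hsum)
  exact sum_pos' (fun i hi => mul_nonneg (hw i hi) (hf i hi).le)
    ⟨j, hjs, mul_pos hj (hf j hjs)⟩

lemma mul_sum_mul_pow_le_sum_mul_pow {ι : Type*} {s : Finset ι} {a : ℝ} (ha₀ : 0 ≤ a)
    (ha₁ : a ≤ 1) {w : ι → ℝ} (hw : ∀ i ∈ s, 0 ≤ w i) {f g : ι → ℕ}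
    (hfg : ∀ i ∈ s, f i ≤ g i + 1) :
    a * ∑ i ∈ s, w i * a ^ g i ≤ ∑ i ∈ s, w i * a ^ f i := by
  rw [mul_sum]
  refine sum_le_sum fun i hi => ?_
  calc a * (w i * a ^ g i) = w i * a ^ (g i + 1) := by ring
    _ ≤ w i * a ^ f i :=
      mul_le_mul_of_nonneg_left (pow_le_pow_of_le_one ha₀ ha₁ (hfg i hi)) (hw i hi)

lemma abs_log_div_le_neg_log {a b c : ℝ} (hc : 0 < c) (ha : 0 < a) (hb : 0 < b)
    (hab : c * a ≤ b) (hba : c * b ≤ a) : |log (a / b)| ≤ -log c := by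
  have h₁ := log_le_log (mul_pos hc ha) hab
  have h₂ := log_le_log (mul_pos hc hb) hba
  rw [log_mul hc.ne' ha.ne'] at h₁
  rw [log_mul hc.ne' hb.ne'] at h₂
  rw [log_div ha.ne' hb.ne', abs_le]
  constructor <;> linarith

section alphaUnif

variable {S : ℕ} {t : ℝ}

lemma one_add_sub_one_mul_exp_neg_pos (hS : 0 < S) (t : ℝ) :
    0 < 1 + ((S : ℝ) - 1) * exp (-t) := by
  have : (1 : ℝ) ≤ S := by exact_mod_cast hS
  have := exp_pos (-t)
  nlinarith

lemma alphaUnif_pos (hS : 0 < S) (ht : 0 < t) : 0 < alphaUnif S t :=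
  div_pos (by simpa using ht) (one_add_sub_one_mul_exp_neg_pos hS t)

lemma alphaUnif_le_one (hS : 0 < S) (t : ℝ) : alphaUnif S t ≤ 1 := by
  have : (0 : ℝ) < S := by exact_mod_cast hS
  have := exp_pos (-t)
  refine (div_le_one (one_add_sub_one_mul_exp_neg_pos hS t)).2 ?_
  nlinarith

lemma inv_one_sub_exp_neg_le (ht : 0 < t) : (1 - exp (-t))⁻¹ ≤ 1 + 1 / t := by
  have hexp : exp (-t) ≤ (1 + t)⁻¹ := by
    rw [exp_neg]
    exact inv_anti₀ (by linarith) (by linarith [add_one_le_exp t])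
  have hlow : t / (1 + t) ≤ 1 - exp (-t) := by
    calc t / (1 + t) = 1 - (1 + t)⁻¹ := by field_simp; ring
      _ ≤ 1 - exp (-t) := by linarith
  calc (1 - exp (-t))⁻¹ ≤ (t / (1 + t))⁻¹ := inv_anti₀ (by positivity) hlow
    _ = 1 + 1 / t := by field_simp; ring

lemma inv_alphaUnif_le (hS : 0 < S) (ht : 0 < t) :
    (alphaUnif S t)⁻¹ ≤ S * (1 + 1 / t) := by
  have hS₁ : (1 : ℝ) ≤ S := by exact_mod_cast hS
  have he : exp (-t) < 1 := exp_lt_one_iff.2 (by linarith)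
  have hnum : 1 + ((S : ℝ) - 1) * exp (-t) ≤ S := by nlinarith
  rw [alphaUnif, inv_div, div_eq_mul_inv]
  exact mul_le_mul hnum (inv_one_sub_exp_neg_le ht) (by positivity) (by positivity)

lemma log_one_add_one_div_le (ht : 0 < t) :
    log (1 + 1 / t) ≤ log 2 + max (log (1 / t)) 0 := by
  rcases le_total t 1 with h | h
  · have h₁ : 1 ≤ 1 / t := (one_le_div ht).2 h
    calc log (1 + 1 / t) ≤ log (2 * (1 / t)) := log_le_log (by positivity) (by linarith)
      _ = log 2 + log (1 / t) := log_mul (by norm_num) (by positivity)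
      _ ≤ log 2 + max (log (1 / t)) 0 := by gcongr; exact le_max_left _ _
  · have h₁ : 1 / t ≤ 1 := (div_le_one ht).2 h
    calc log (1 + 1 / t) ≤ log 2 := log_le_log (by positivity) (by linarith)
      _ ≤ log 2 + max (log (1 / t)) 0 := le_add_of_nonneg_right (le_max_right _ _)

lemma neg_log_alphaUnif_le (hS : 2 ≤ S) (ht : 0 < t) :
    -log (alphaUnif S t) ≤ 2 * (log S + max (log (1 / t)) 0) := by
  have hS₀ : 0 < S := by omega
  have hlog2 : log 2 ≤ log S := log_le_log (by norm_num) (by exact_mod_cast hS)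
  have hmax : 0 ≤ max (log (1 / t)) 0 := le_max_right _ _
  have hS' : (0 : ℝ) < S := by exact_mod_cast hS₀
  calc -log (alphaUnif S t) = log (alphaUnif S t)⁻¹ := (log_inv _).symm
    _ ≤ log (S * (1 + 1 / t)) :=
      log_le_log (inv_pos.2 (alphaUnif_pos hS₀ ht)) (inv_alphaUnif_le hS₀ ht)
    _ = log S + log (1 + 1 / t) := log_mul hS'.ne' (by positivity)
    _ ≤ 2 * (log S + max (log (1 / t)) 0) := by
      linarith [log_one_add_one_div_le ht]

end alphaUnif

lemma qtUnif_eq_mul_sum {S d : ℕ} (q0 : (Fin d → Fin S) → ℝ) (t : ℝ) (y : Fin d → Fin S) :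
    qtUnif q0 t y = ((1 + ((S : ℝ) - 1) * exp (-t)) / S) ^ d *
      ∑ x0, q0 x0 * alphaUnif S t ^ hamm y x0 := by
  rw [qtUnif, mul_sum]
  exact sum_congr rfl fun _ _ => by ring

lemma qtUnif_div_qtUnif {S d : ℕ} (hS : 0 < S) (q0 : (Fin d → Fin S) → ℝ) (t : ℝ)
    (x y : Fin d → Fin S) :
    qtUnif q0 t y / qtUnif q0 t x
      = (∑ x0, q0 x0 * alphaUnif S t ^ hamm y x0) / (∑ x0, q0 x0 * alphaUnif S t ^ hamm x x0) := by
  have hS' : (0 : ℝ) < S := by exact_mod_cast hS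
  have hc := one_add_sub_one_mul_exp_neg_pos hS t
  rw [qtUnif_eq_mul_sum, qtUnif_eq_mul_sum, mul_div_mul_left _ _ (by positivity)]

/-- For the uniform noising process on `[S]^d`, the score function satisfies
`s_t(y,x) = E_{x0~q0}[α_t^{ham(y,x0)}] / E_{x0~q0}[α_t^{ham(x,x0)}]`, and consequently for
any `x, y` at Hamming distance `1`, `|log s_t(y,x)| ≤ -log α_t ≲ log S + max(log(1/t), 0)`
with a universal implied constant. -/
theorem uniform_score_eq_and_log_bound :
    ∃ C : ℝ, 0 < C ∧
      ∀ (S d : ℕ), 2 ≤ S →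
        ∀ (q0 : (Fin d → Fin S) → ℝ), (∀ z, 0 ≤ q0 z) → (∑ z, q0 z = 1) →
        ∀ (t : ℝ), 0 < t →
        ∀ (x y : Fin d → Fin S), hamm x y = 1 →
          qtUnif q0 t y / qtUnif q0 t x
            = (∑ x0, q0 x0 * alphaUnif S t ^ hamm y x0)
                / (∑ x0, q0 x0 * alphaUnif S t ^ hamm x x0) ∧
          |Real.log (qtUnif q0 t y / qtUnif q0 t x)| ≤ -Real.log (alphaUnif S t) ∧
          -Real.log (alphaUnif S t) ≤ C * (Real.log S + max (Real.log (1 / t)) 0) := by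
  refine ⟨2, two_pos, fun S d hS q0 hq0 hsum t ht x y hxy => ?_⟩
  have hS₀ : 0 < S := by omega
  have hα₀ := alphaUnif_pos hS₀ ht
  have hα₁ := alphaUnif_le_one hS₀ t
  have hscore := qtUnif_div_qtUnif hS₀ q0 t x y
  have hpos : ∀ z : Fin d → Fin S, 0 < ∑ x0, q0 x0 * alphaUnif S t ^ hamm z x0 := fun z =>
    sum_mul_pos_of_sum_pos (fun i _ => hq0 i) (by rw [hsum]; exact one_pos)
      (fun i _ => pow_pos hα₀ _)
  refine ⟨hscore, ?_, neg_log_alphaUnif_le hS ht⟩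
  rw [hscore]
  exact abs_log_div_le_neg_log hα₀ (hpos y) (hpos x)
    (mul_sum_mul_pow_le_sum_mul_pow hα₀.le hα₁ (fun i _ => hq0 i)
      fun z _ => hamm_le_hamm_add_one hxy z)
    (mul_sum_mul_pow_le_sum_mul_pow hα₀.le hα₁ (fun i _ => hq0 i)
      fun z _ => hamm_le_hamm_add_one ((hamm_comm y x).trans hxy) z)
end
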